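/- Tutte-like relation for four-colorings at a crossing: the number of colorings of a web containing two 1-strands joined by a thick edge (a horizontal H-piece) plus the number of colorings of the web with this local piece replaced by two vertical parallel 1-edges equals the number of colorings with the piece replaced by a vertical H-piece plus the number with two horizontal parallel 1-edges, where all four webs agree outside a disk and have four thin boundary points on the disk. -/

import Mathlib

/-!
An H-piece has at most one coloring: its thick edge must carry the two distinct colors
of the thin edges at either end. Hence every local count is the indicator of some
coincidences among the boundary colors, and the local relation is a case check on which
of them coincide. Weighting it by the number of outside colorings of each boundary
assignment and summing gives the global relation.
-/

/-- Colorings of the horizontal H-piece: boundary thin points NW, NE, SW, SE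
colored `a, b, c, d`; two 112-vertices joined by a thick edge `Y`, the left one
joining NW and SW, the right one joining NE and SE. -/
def hHorizCount (a b c d : Fin 4) : ℕ :=
  (Finset.univ.filter (fun Y : Finset (Fin 4) =>
    Y = ({a, c} : Finset (Fin 4)) ∧ a ≠ c ∧ Y = ({b, d} : Finset (Fin 4)) ∧ b ≠ d)).card

/-- Colorings of the vertical H-piece: the thick edge joins a top 112-vertex
(NW, NE) and a bottom one (SW, SE). -/
def hVertCount (a b c d : Fin 4) : ℕ :=
  (Finset.univ.filter (fun Y : Finset (Fin 4) =>
    Y = ({a, b} : Finset (Fin 4)) ∧ a ≠ b ∧ Y = ({c, d} : Finset (Fin 4)) ∧ c ≠ d)).card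

/-- Colorings of two vertical parallel 1-edges (NW–SW and NE–SE). -/
def vertLinesCount (a b c d : Fin 4) : ℕ := if a = c ∧ b = d then 1 else 0

/-- Colorings of two horizontal parallel 1-edges (NW–NE and SW–SE). -/
def horizLinesCount (a b c d : Fin 4) : ℕ := if a = b ∧ c = d then 1 else 0

open Finset

theorem Finset.pair_eq_pair_iff {α : Type*} [DecidableEq α] {a b c d : α} :
    ({a, b} : Finset α) = {c, d} ↔ a = c ∧ b = d ∨ a = d ∧ b = c := by
  rw [← coe_inj, coe_pair, coe_pair, Set.pair_eq_pair_iff]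

theorem card_filter_eq_pair_and_eq_pair {α : Type*} [Fintype α] [DecidableEq α] (a b c d : α) :
    #{Y : Finset α | Y = {a, b} ∧ a ≠ b ∧ Y = {c, d} ∧ c ≠ d} =
      if a ≠ b ∧ (a = c ∧ b = d ∨ a = d ∧ b = c) then 1 else 0 := by
  have hfilter : ({Y : Finset α | Y = {a, b} ∧ a ≠ b ∧ Y = {c, d} ∧ c ≠ d} : Finset _) =
      if a ≠ b ∧ (a = c ∧ b = d ∨ a = d ∧ b = c) then {{a, b}} else ∅ := by
    ext Y
    split_ifs <;> simp only [mem_filter_univ, mem_singleton, notMem_empty] <;>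
      grind [Finset.pair_eq_pair_iff]
  rw [hfilter]
  split_ifs <;> rfl

theorem hHorizCount_eq (a b c d : Fin 4) :
    hHorizCount a b c d = if a ≠ c ∧ (a = b ∧ c = d ∨ a = d ∧ c = b) then 1 else 0 :=
  card_filter_eq_pair_and_eq_pair a c b d

theorem hVertCount_eq (a b c d : Fin 4) :
    hVertCount a b c d = if a ≠ b ∧ (a = c ∧ b = d ∨ a = d ∧ b = c) then 1 else 0 :=
  card_filter_eq_pair_and_eq_pair a b c d

theorem ite_pair_add_ite_eq_ite_pair_add_ite {α : Type*} [DecidableEq α] (a b c d : α) :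
    ((if a ≠ c ∧ (a = b ∧ c = d ∨ a = d ∧ c = b) then 1 else 0) +
        (if a = c ∧ b = d then 1 else 0) : ℕ) =
      (if a ≠ b ∧ (a = c ∧ b = d ∨ a = d ∧ b = c) then 1 else 0) +
        (if a = b ∧ c = d then 1 else 0) := by
  split_ifs <;> grind

theorem hHorizCount_add_vertLinesCount (a b c d : Fin 4) :
    hHorizCount a b c d + vertLinesCount a b c d =
      hVertCount a b c d + horizLinesCount a b c d := by
  rw [hHorizCount_eq, hVertCount_eq]
  exact ite_pair_add_ite_eq_ite_pair_add_ite a b c d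

theorem Finset.sum_mul_add_sum_mul_eq_of_add_eq {ι R : Type*} [NonUnitalNonAssocSemiring R]
    (s : Finset ι) (w f g h k : ι → R) (hfg : ∀ i ∈ s, f i + g i = h i + k i) :
    ∑ i ∈ s, w i * f i + ∑ i ∈ s, w i * g i = ∑ i ∈ s, w i * h i + ∑ i ∈ s, w i * k i := by
  simp only [← sum_add_distrib, ← mul_add]
  exact sum_congr rfl fun i hi => by rw [hfg i hi]

/-- Tutte-like relation: for every assignment of pigments to the four thin
boundary points the local coloring counts satisfy
`Hh + vertical lines = Hv + horizontal lines`; consequently, for webs agreeing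
outside the disk (encoded by an arbitrary weight `w` counting the outside
colorings for each boundary assignment), the numbers of colorings satisfy
`t₄(H-horizontal) + t₄(vertical lines) = t₄(H-vertical) + t₄(horizontal lines)`. -/
theorem tutte_relation_crossing :
    (∀ a b c d : Fin 4,
      hHorizCount a b c d + vertLinesCount a b c d =
        hVertCount a b c d + horizLinesCount a b c d) ∧
    (∀ w : Fin 4 → Fin 4 → Fin 4 → Fin 4 → ℕ,
      (∑ q : Fin 4 × Fin 4 × Fin 4 × Fin 4,
          w q.1 q.2.1 q.2.2.1 q.2.2.2 * hHorizCount q.1 q.2.1 q.2.2.1 q.2.2.2) +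
      (∑ q : Fin 4 × Fin 4 × Fin 4 × Fin 4,
          w q.1 q.2.1 q.2.2.1 q.2.2.2 * vertLinesCount q.1 q.2.1 q.2.2.1 q.2.2.2) =
      (∑ q : Fin 4 × Fin 4 × Fin 4 × Fin 4,
          w q.1 q.2.1 q.2.2.1 q.2.2.2 * hVertCount q.1 q.2.1 q.2.2.1 q.2.2.2) +
      (∑ q : Fin 4 × Fin 4 × Fin 4 × Fin 4,
          w q.1 q.2.1 q.2.2.1 q.2.2.2 * horizLinesCount q.1 q.2.1 q.2.2.1 q.2.2.2)) := by
  refine ⟨hHorizCount_add_vertLinesCount, fun w => ?_⟩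
  exact sum_mul_add_sum_mul_eq_of_add_eq _ _ _ _ _ _ fun q _ =>
    hHorizCount_add_vertLinesCount _ _ _ _
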